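/- Fix ε ∈ ℝ and suppose (u, v), (u′, v′) ∈ ℝ² satisfy the discrete scheme p3⁺(u′, v′) = p3⁻(u, v) and q3⁻(u′, v′) = q3⁺(u, v). Then Q(u′, v′) = Q(u, v) + (ε³·u·v/2)·(I11 − I22)·(I11·u² + I22·v²)·(I13·u + I23·v). In particular, if I11 = I22 then Q(u′, v′) = Q(u, v), i.e. the discrete system evolves on the level sets of Q. -/
import Mathlib


noncomputable section

/-- `p3⁺` (sign `+1`) and `p3⁻` (sign `-1`). -/
def p3 (I11 I22 I13 I23 ε sgn u v : ℝ) : ℝ :=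
  I11 * u + sgn * (ε / 2) * v * (I13 * u + I23 * v)
    + (ε ^ 2 / 4) * u * (I11 * u ^ 2 + I22 * v ^ 2)

/-- `q3⁺` (sign `+1`) and `q3⁻` (sign `-1`). -/
def q3 (I11 I22 I13 I23 ε sgn u v : ℝ) : ℝ :=
  I22 * v + sgn * (ε / 2) * u * (I13 * u + I23 * v)
    + (ε ^ 2 / 4) * v * (I11 * u ^ 2 + I22 * v ^ 2)

/-- The polynomial `Q`. -/
def Qpoly (I11 I22 I13 I23 ε u v : ℝ) : ℝ :=
  (1 / 16) * (I11 * u ^ 2 + I22 * v ^ 2) *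
    (16 * I11 * I22
      + ε ^ 2 * (8 * I11 * I22 * (u ^ 2 + v ^ 2) + 4 * (I13 * u + I23 * v) ^ 2)
      + 4 * ε ^ 3 * u * v * (I22 - I11) * (I13 * u + I23 * v)
      + ε ^ 4 * (I11 * u ^ 2 + I22 * v ^ 2) * (I22 * u ^ 2 + I11 * v ^ 2))

/-- Along the discrete Euler–Poincaré–Suslov equations of the consistent
(Cayley-based) discretisation, `Q` changes by an explicit cubic-in-`ε` amount; in
particular if `I11 = I22` then `Q` is preserved. -/
theorem suslov_discrete_energy_evolution_consistent
    (I11 I22 I13 I23 : ℝ) (hI11 : 0 < I11) (hI22 : 0 < I22)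
    (ε u v u' v' : ℝ)
    (hp : p3 I11 I22 I13 I23 ε 1 u' v' = p3 I11 I22 I13 I23 ε (-1) u v)
    (hq : q3 I11 I22 I13 I23 ε (-1) u' v' = q3 I11 I22 I13 I23 ε 1 u v) :
    Qpoly I11 I22 I13 I23 ε u' v' =
        Qpoly I11 I22 I13 I23 ε u v
          + (ε ^ 3 * u * v / 2) * (I11 - I22) * (I11 * u ^ 2 + I22 * v ^ 2) *
            (I13 * u + I23 * v) ∧
      (I11 = I22 → Qpoly I11 I22 I13 I23 ε u' v' = Qpoly I11 I22 I13 I23 ε u v) := by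
  have key : ∀ U V : ℝ, Qpoly I11 I22 I13 I23 ε U V
      = I22 * (p3 I11 I22 I13 I23 ε 1 U V) ^ 2
        + I11 * (q3 I11 I22 I13 I23 ε (-1) U V) ^ 2 := by
    intro U V; simp only [p3, q3, Qpoly]; ring
  have key2 : Qpoly I11 I22 I13 I23 ε u v
      + (ε ^ 3 * u * v / 2) * (I11 - I22) * (I11 * u ^ 2 + I22 * v ^ 2) *
          (I13 * u + I23 * v)
      = I22 * (p3 I11 I22 I13 I23 ε (-1) u v) ^ 2
        + I11 * (q3 I11 I22 I13 I23 ε 1 u v) ^ 2 := by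
    simp only [p3, q3, Qpoly]; ring
  have main : Qpoly I11 I22 I13 I23 ε u' v' =
      Qpoly I11 I22 I13 I23 ε u v
        + (ε ^ 3 * u * v / 2) * (I11 - I22) * (I11 * u ^ 2 + I22 * v ^ 2) *
          (I13 * u + I23 * v) := by
    rw [key u' v', hp, hq, key2]
  exact ⟨main, fun h => by rw [main, h]; ring⟩

end
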